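/- arXiv:2603.17896 — 3 statements merged into one kernel-verified Lean document; each statement's English description precedes it below -/
import Mathlib

section
/- For natural numbers k, h, j, the Gaussian triple product of probabilist's Hermite polynomials satisfies E_{z∼N(0,1)}[He_k(z) He_h(z) He_j(z)] = k! h! j! / ((s−k)! (s−h)! (s−j)!) if k + h + j = 2s is even and the three triangle inequalities k + h ≥ j, k + j ≥ h, h + j ≥ k hold, and the expectation is 0 otherwise. -/
open MeasureTheory ProbabilityTheory

/-- Standard Gaussian measure on ℝ. -/
noncomputable def stdG : Measure ℝ := gaussianReal 0 1

/-- Probabilist's Hermite polynomial of degree `n`, evaluated at `x : ℝ`. -/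
noncomputable def He (n : ℕ) (x : ℝ) : ℝ := Polynomial.aeval x (Polynomial.hermite n)

/-!
Gaussian integration by parts, `E[z p(z)] = E[p'(z)]`, combined with `He (n+1) = X He n - He n'`,
gives `E[He n * p] = E[p⁽ⁿ⁾]` for every polynomial `p`. For `p = He h * He j` the Leibniz rule and
`(He n)⁽ⁱ⁾ = n (n-1) ⋯ (n-i+1) He (n-i)` turn the triple product into a sum of pair products
`E[He a * He b] = δ_ab a!`. A term survives only at `i = s - h` where `k + h + j = 2s`, and that
index is admissible exactly when the three triangle inequalities hold.
-/

open Polynomial Finset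
open scoped Nat NNReal

namespace Polynomial

theorem derivative_hermite_succ (n : ℕ) : derivative (hermite (n + 1)) = (n + 1) • hermite n := by
  induction n with
  | zero => simp
  | succ n ih =>
    rw [hermite_succ (n + 1), derivative_sub, derivative_mul, derivative_X, one_mul, ih,
      derivative_smul, hermite_succ n]
    simp only [nsmul_eq_mul]
    push_cast
    ring

theorem iterate_derivative_hermite (n i : ℕ) :
    derivative^[i] (hermite n) = n.descFactorial i • hermite (n - i) := by
  induction i with
  | zero => simp
  | succ i ih =>
    rw [Function.iterate_succ_apply', ih, derivative_smul, Nat.descFactorial_succ]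
    rcases hni : n - i with _ | m
    · simp
    · rw [derivative_hermite_succ, smul_smul, mul_comm, show n - (i + 1) = m by omega]

end Polynomial

namespace ProbabilityTheory

variable {μ : ℝ} {v : ℝ≥0}

lemma integrable_gaussianReal_iff (hv : v ≠ 0) {f : ℝ → ℝ} :
    Integrable f (gaussianReal μ v) ↔ Integrable (fun x ↦ gaussianPDFReal μ v x * f x) := by
  rw [gaussianReal_of_var_ne_zero _ hv, integrable_withDensity_iff_integrable_smul'
    (measurable_gaussianPDF _ _) (ae_of_all _ fun _ ↦ gaussianPDF_lt_top)]
  simp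

lemma integrable_pow_gaussianReal (n : ℕ) : Integrable (fun x : ℝ ↦ x ^ n) (gaussianReal μ v) := by
  rw [← integrable_norm_iff (by fun_prop)]
  simpa using (memLp_id_gaussianReal (μ := μ) (v := v) n).integrable_norm_pow'

lemma integrable_eval_gaussianReal (p : ℝ[X]) :
    Integrable (fun x ↦ p.eval x) (gaussianReal μ v) := by
  induction p using Polynomial.induction_on' with
  | add p q hp hq =>
    simp only [eval_add]
    exact hp.add hq
  | monomial n c => simpa using (integrable_pow_gaussianReal n).const_mul c

lemma hasDerivAt_gaussianPDFReal (x : ℝ) :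
    HasDerivAt (gaussianPDFReal μ v) (-(x - μ) / v * gaussianPDFReal μ v x) x := by
  have hexponent : HasDerivAt (fun x ↦ -(x - μ) ^ 2 / (2 * v)) (-(x - μ) / v) x := by
    refine ((((hasDerivAt_id x).sub_const μ).pow 2).fun_neg.div_const _).congr_deriv ?_
    simp only [id, Nat.cast_ofNat, mul_one]
    ring
  rw [gaussianPDFReal_def]
  exact (hexponent.exp.const_mul _).congr_deriv (by ring)

end ProbabilityTheory

instance isProbabilityMeasure_stdG : IsProbabilityMeasure stdG :=
  inferInstanceAs (IsProbabilityMeasure (gaussianReal 0 1))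

noncomputable def stdGMean : ℝ[X] →ₗ[ℝ] ℝ where
  toFun p := ∫ x, p.eval x ∂stdG
  map_add' p q := by
    simp only [eval_add]
    exact integral_add (integrable_eval_gaussianReal p) (integrable_eval_gaussianReal q)
  map_smul' c p := by
    simp only [eval_smul, smul_eq_mul, RingHom.id_apply]
    exact integral_const_mul c _

lemma stdGMean_apply (p : ℝ[X]) : stdGMean p = ∫ x, p.eval x ∂stdG := rfl

lemma stdGMean_X_mul (p : ℝ[X]) : stdGMean (X * p) = stdGMean (derivative p) := by
  have hint (q : ℝ[X]) : Integrable (fun x ↦ gaussianPDFReal 0 1 x * q.eval x) :=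
    (integrable_gaussianReal_iff one_ne_zero).mp (integrable_eval_gaussianReal q)
  have hderiv (x : ℝ) : HasDerivAt (fun x ↦ gaussianPDFReal 0 1 x * p.eval x)
      (gaussianPDFReal 0 1 x * (derivative p).eval x
        - gaussianPDFReal 0 1 x * (X * p).eval x) x := by
    refine ((hasDerivAt_gaussianPDFReal x).fun_mul (p.hasDerivAt x)).congr_deriv ?_
    simp only [eval_mul, eval_X, sub_zero, NNReal.coe_one, div_one]
    ring
  have hparts :=
    integral_eq_zero_of_hasDerivAt_of_integrable hderiv ((hint _).sub (hint _)) (hint p)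
  rw [integral_sub (hint _) (hint _), sub_eq_zero] at hparts
  simp only [stdGMean_apply, stdG, integral_gaussianReal_eq_integral_smul one_ne_zero, smul_eq_mul,
    hparts]

lemma stdGMean_one : stdGMean 1 = 1 := by
  simp [stdGMean_apply]

noncomputable def hermiteReal (n : ℕ) : ℝ[X] := (hermite n).map (Int.castRingHom ℝ)

lemma hermiteReal_zero : hermiteReal 0 = 1 := by
  simp [hermiteReal]

lemma He_eq_eval_hermiteReal (n : ℕ) (x : ℝ) : He n x = (hermiteReal n).eval x := by
  rw [He, aeval_def, algebraMap_int_eq, hermiteReal, eval_map]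

lemma iterate_derivative_hermiteReal (n i : ℕ) :
    derivative^[i] (hermiteReal n) = n.descFactorial i • hermiteReal (n - i) := by
  rw [hermiteReal, hermiteReal, iterate_derivative_map, iterate_derivative_hermite]
  simp [nsmul_eq_mul]

lemma stdGMean_hermiteReal_succ_mul (n : ℕ) (p : ℝ[X]) :
    stdGMean (hermiteReal (n + 1) * p) = stdGMean (hermiteReal n * derivative p) := by
  have : hermiteReal (n + 1) * p = X * (hermiteReal n * p) - derivative (hermiteReal n) * p := by
    rw [hermiteReal, hermiteReal, hermite_succ, Polynomial.map_sub, Polynomial.map_mul, map_X,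
      derivative_map]
    ring
  rw [this, map_sub, stdGMean_X_mul, derivative_mul, map_add, add_sub_cancel_left]

lemma stdGMean_hermiteReal_mul (n : ℕ) (p : ℝ[X]) :
    stdGMean (hermiteReal n * p) = stdGMean (derivative^[n] p) := by
  induction n generalizing p with
  | zero => rw [hermiteReal_zero, one_mul, Function.iterate_zero_apply]
  | succ n ih => rw [stdGMean_hermiteReal_succ_mul, ih, Function.iterate_succ_apply]

lemma stdGMean_hermiteReal_mul_hermiteReal (m n : ℕ) :
    stdGMean (hermiteReal m * hermiteReal n) = if m = n then (m ! : ℝ) else 0 := by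
  have vanish {m n : ℕ} (hmn : m < n) : stdGMean (hermiteReal n * hermiteReal m) = 0 := by
    rw [stdGMean_hermiteReal_mul, iterate_derivative_hermiteReal,
      Nat.descFactorial_eq_zero_iff_lt.mpr hmn, zero_smul, map_zero]
  rcases lt_trichotomy m n with hmn | rfl | hnm
  · rw [mul_comm, vanish hmn, if_neg hmn.ne]
  · rw [stdGMean_hermiteReal_mul, iterate_derivative_hermiteReal, Nat.descFactorial_self,
      Nat.sub_self, hermiteReal_zero, map_nsmul, stdGMean_one, if_pos rfl, nsmul_eq_mul, mul_one]
  · rw [vanish hnm, if_neg hnm.ne']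

lemma stdGMean_hermiteReal_mul_hermiteReal_mul_hermiteReal (k h j : ℕ) :
    stdGMean (hermiteReal k * hermiteReal h * hermiteReal j) =
      ∑ i ∈ range (k + 1), (k.choose i * h.descFactorial (k - i) * j.descFactorial i *
        if h - (k - i) = j - i then ((h - (k - i))! : ℝ) else 0) := by
  rw [mul_assoc, stdGMean_hermiteReal_mul, iterate_derivative_mul, map_sum]
  refine sum_congr rfl fun i _ ↦ ?_
  rw [iterate_derivative_hermiteReal, iterate_derivative_hermiteReal, smul_mul_smul_comm,
    map_nsmul, map_nsmul, stdGMean_hermiteReal_mul_hermiteReal]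
  simp only [nsmul_eq_mul]
  push_cast
  ring

lemma sum_choose_mul_descFactorial_mul_descFactorial (k h j : ℕ) :
    ∑ i ∈ range (k + 1), (k.choose i * h.descFactorial (k - i) * j.descFactorial i *
        if h - (k - i) = j - i then ((h - (k - i))! : ℝ) else 0) =
      if Even (k + h + j) ∧ j ≤ k + h ∧ h ≤ k + j ∧ k ≤ h + j then
        (k ! * h ! * j ! : ℝ) / (((k + h + j) / 2 - k)! * ((k + h + j) / 2 - h)! *
          ((k + h + j) / 2 - j)!)
      else 0 := by
  have support {i : ℕ} (hi : (k.choose i * h.descFactorial (k - i) * j.descFactorial i *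
      if h - (k - i) = j - i then ((h - (k - i))! : ℝ) else 0) ≠ 0) :
      k - i ≤ h ∧ i ≤ j ∧ h - (k - i) = j - i := by
    by_contra hbad
    apply hi
    rcases (by omega : h < k - i ∨ j < i ∨ h - (k - i) ≠ j - i) with hlt | hlt | hne
    · simp [Nat.descFactorial_eq_zero_iff_lt.mpr hlt]
    · simp [Nat.descFactorial_eq_zero_iff_lt.mpr hlt]
    · simp [hne]
  split_ifs with hcond
  · obtain ⟨⟨s, hs⟩, hjkh, hhkj, hkhj⟩ := hcond
    rw [show (k + h + j) / 2 = s by omega,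
      sum_eq_single_of_mem (s - h) (mem_range.mpr (by omega)) fun i _ hi ↦ by
      by_contra hne
      have := support hne
      omega]
    have hk := Nat.choose_mul_factorial_mul_factorial (n := k) (k := s - h) (by omega)
    have hh := Nat.factorial_mul_descFactorial (n := h) (k := s - j) (by omega)
    have hj := Nat.factorial_mul_descFactorial (n := j) (k := s - h) (by omega)
    rw [show k - (s - h) = s - j by omega] at hk ⊢
    rw [show h - (s - j) = s - k by omega] at hh ⊢
    rw [show j - (s - h) = s - k by omega] at hj
    rw [if_pos (by omega), eq_div_iff (by positivity), ← hk, ← hh, ← hj]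
    push_cast
    ring
  · refine sum_eq_zero fun i hi ↦ ?_
    by_contra hne
    obtain ⟨hkh, hij, heq⟩ := support hne
    rw [mem_range] at hi
    exact hcond ⟨⟨k + j - i, by omega⟩, by omega, by omega, by omega⟩

/-- Gaussian triple product of probabilist's Hermite polynomials:
`E[He_k He_h He_j] = k! h! j! / ((s−k)!(s−h)!(s−j)!)` when `k+h+j = 2s` is even and
the triangle inequalities hold, and `0` otherwise. -/
theorem stmt4 (k h j : ℕ) :
    ((Even (k + h + j) ∧ j ≤ k + h ∧ h ≤ k + j ∧ k ≤ h + j) →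
      ∫ z, He k z * He h z * He j z ∂stdG
        = (Nat.factorial k * Nat.factorial h * Nat.factorial j : ℝ) /
          (Nat.factorial ((k + h + j) / 2 - k) *
           Nat.factorial ((k + h + j) / 2 - h) *
           Nat.factorial ((k + h + j) / 2 - j))) ∧
    (¬(Even (k + h + j) ∧ j ≤ k + h ∧ h ≤ k + j ∧ k ≤ h + j) →
      ∫ z, He k z * He h z * He j z ∂stdG = 0) := by
  have key : ∫ z, He k z * He h z * He j z ∂stdG =
      if Even (k + h + j) ∧ j ≤ k + h ∧ h ≤ k + j ∧ k ≤ h + j then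
        (k ! * h ! * j ! : ℝ) / (((k + h + j) / 2 - k)! * ((k + h + j) / 2 - h)! *
          ((k + h + j) / 2 - j)!)
      else 0 := by
    rw [← sum_choose_mul_descFactorial_mul_descFactorial,
      ← stdGMean_hermiteReal_mul_hermiteReal_mul_hermiteReal, stdGMean_apply]
    simp only [He_eq_eval_hermiteReal, eval_mul]
  exact ⟨fun hc ↦ by rw [key, if_pos hc], fun hc ↦ by rw [key, if_neg hc]⟩
end

section
/- Let σ : ℝ → ℝ be even and polynomially bounded, let λ ≥ 0, let z ∼ N(0,1) and ξ ∼ N(0,1) independent, and set Y = √λ · σ(z) + ξ. Then the conditional expectation E[z | Y] = 0 almost surely. -/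
open MeasureTheory ProbabilityTheory

noncomputable def gphi (x : ℝ) : ℝ := Real.exp (-(x ^ 2) / 2) / Real.sqrt (2 * Real.pi)

def PolyBounded (σ : ℝ → ℝ) : Prop :=
  ∃ (C : ℝ) (k : ℕ), 0 < C ∧ 0 < k ∧ ∀ x : ℝ, |σ x| ≤ C * (1 + |x| ^ k)

theorem Function.Odd.integral_eq_zero {G E : Type*} [MeasurableSpace G] [AddGroup G]
    [MeasurableNeg G] [NormedAddCommGroup E] [NormedSpace ℝ E] {μ : Measure G}
    [μ.IsNegInvariant] {f : G → E} (hf : f.Odd) : ∫ x, f x ∂μ = 0 := by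
  have h : ∫ x, f x ∂μ = -∫ x, f x ∂μ :=
    calc ∫ x, f x ∂μ = ∫ x, f (-x) ∂μ := (integral_neg_eq_self f μ).symm
      _ = ∫ x, -f x ∂μ := by simp only [hf.eq]
      _ = -∫ x, f x ∂μ := integral_neg f
  linear_combination (norm := module) (2⁻¹ : ℝ) • h

theorem gphi_even : Function.Even gphi := fun x => by simp only [gphi, even_two, Even.neg_pow]

theorem stmt6_general (σ : ℝ → ℝ)
    (heven : ∀ x : ℝ, σ (-x) = σ x) (lam : ℝ) :
    ∀ y : ℝ,
      (∫ z : ℝ, z * gphi z * gphi (y - Real.sqrt lam * σ z)) /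
        (∫ z : ℝ, gphi z * gphi (y - Real.sqrt lam * σ z)) = 0 := by
  intro y
  have hodd : Function.Odd fun z : ℝ => z * gphi z * gphi (y - Real.sqrt lam * σ z) :=
    fun z => by simp only [neg_mul, gphi_even.eq, heven]
  rw [hodd.integral_eq_zero, zero_div]

/-- For even polynomially bounded σ, `λ ≥ 0`, and `Y = √λ σ(z) + ξ` with `z, ξ`
i.i.d. standard Gaussians, the conditional expectation `E[z | Y = y]` vanishes for
every `y`: the numerator `∫ z φ(z) φ(y − √λ σ(z)) dz` is zero (hence the ratio
defining `E[z | Y = y]` is zero), i.e. `E[z | Y] = 0` almost surely. -/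
theorem stmt6 (σ : ℝ → ℝ) (hmeas : Measurable σ) (hpb : PolyBounded σ)
    (heven : ∀ x : ℝ, σ (-x) = σ x) (lam : ℝ) (hlam : 0 ≤ lam) :
    ∀ y : ℝ,
      (∫ z : ℝ, z * gphi z * gphi (y - Real.sqrt lam * σ z)) /
        (∫ z : ℝ, gphi z * gphi (y - Real.sqrt lam * σ z)) = 0 :=
  stmt6_general σ heven lam
end

section
/- Let φ be the standard Gaussian density and He_β the probabilist's Hermite polynomial of degree β, so that φ^{(β)}(x) = (−1)^β φ(x) He_β(x). Let σ : ℝ → ℝ be polynomially bounded and, for λ ∈ (0,1], let Z_λ(y) := E_{z∼N(0,1)}[φ(y − √λ σ(z))]. Then lim_{λ→0⁺} ∫_ℝ (φ^{(β)}(y))² / Z_λ(y) dy = β!. -/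
open MeasureTheory ProbabilityTheory Filter

open Polynomial Real Set
open scoped Nat Topology

theorem tendsto_integral_div_of_le_of_tendsto {α ι : Type*} [MeasurableSpace α] {μ : Measure α}
    {l : Filter ι} [l.IsCountablyGenerated] {u g f : α → ℝ} {F : ι → α → ℝ}
    (hu : Measurable u) (hu0 : ∀ a, 0 ≤ u a) (hF : ∀ i, Measurable (F i))
    (hg : ∀ a, 0 < g a) (hgF : ∀ᶠ i in l, ∀ a, g a ≤ F i a)
    (hint : Integrable (fun a => u a / g a) μ)
    (hlim : ∀ a, Tendsto (fun i => F i a) l (𝓝 (f a))) (hf : ∀ a, f a ≠ 0) :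
    Tendsto (fun i => ∫ a, u a / F i a ∂μ) l (𝓝 (∫ a, u a / f a ∂μ)) :=
  tendsto_integral_filter_of_dominated_convergence _
    (.of_forall fun i => (hu.div (hF i)).aestronglyMeasurable)
    (hgF.mono fun i hi => .of_forall fun a => by
      rw [norm_of_nonneg (div_nonneg (hu0 a) ((hg a).trans_le (hi a)).le)]
      exact div_le_div_of_nonneg_left (hu0 a) (hg a) (hi a))
    hint (.of_forall fun a => tendsto_const_nhds.div (hlim a) (hf a))

theorem Polynomial.derivative_hermite_succ_s10 (n : ℕ) :
    derivative (hermite (n + 1)) = (n + 1 : ℕ) • hermite n := by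
  induction n with
  | zero => simp [hermite_zero]
  | succ n ih =>
    rw [hermite_succ (n + 1), derivative_sub, derivative_mul, derivative_X, ih, derivative_smul,
      one_mul, hermite_succ n, mul_smul_comm]
    module

theorem He_eq_eval_map (n : ℕ) (x : ℝ) : He n x = ((hermite n).map (algebraMap ℤ ℝ)).eval x := by
  rw [He, eval_map, aeval_def]

theorem continuous_He (n : ℕ) : Continuous (He n) := (hermite n).continuous_aeval

theorem hasDerivAt_He_succ (n : ℕ) (x : ℝ) : HasDerivAt (He (n + 1)) ((n + 1) * He n x) x := by
  have h := (hermite (n + 1)).hasDerivAt_aeval (𝕜 := ℝ) x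
  rw [derivative_hermite_succ_s10] at h
  exact h.congr_deriv (by simp [He])

theorem gphi_pos (x : ℝ) : 0 < gphi x := by unfold gphi; positivity

theorem gphi_eq_gaussianPDFReal : gphi = gaussianPDFReal 0 1 := by
  ext x
  simp [gphi, gaussianPDFReal_def, div_eq_inv_mul]

theorem continuous_gphi : Continuous gphi := by unfold gphi; fun_prop

theorem gphi_le (x : ℝ) : gphi x ≤ (√(2 * π))⁻¹ := by
  rw [gphi, div_eq_mul_inv]
  exact mul_le_of_le_one_left (by positivity) (exp_le_one_iff.2 (by nlinarith [sq_nonneg x]))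

theorem hasDerivAt_gphi (x : ℝ) : HasDerivAt gphi (-x * gphi x) x := by
  have h : HasDerivAt (fun x : ℝ => -(x ^ 2) / 2) (-x) x :=
    ((hasDerivAt_pow 2 x).neg.div_const 2).congr_deriv (by simp; ring)
  unfold gphi
  exact (h.exp.div_const (√(2 * π))).congr_deriv (by ring)

theorem hasDerivAt_He_mul_gphi (n : ℕ) (x : ℝ) :
    HasDerivAt (fun x => He n x * gphi x) (-(He (n + 1) x * gphi x)) x := by
  refine (((hermite n).hasDerivAt_aeval x).mul (hasDerivAt_gphi x)).congr_deriv ?_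
  simp only [He, hermite_succ, map_sub, map_mul, aeval_X]
  ring

theorem integrable_eval_mul_exp_neg_mul_sq {b : ℝ} (hb : 0 < b) (p : ℝ[X]) :
    Integrable (fun x : ℝ => p.eval x * exp (-b * x ^ 2)) := by
  induction p using Polynomial.induction_on' with
  | add p q hp hq => exact (hp.add hq).congr (.of_forall fun x => by simp [add_mul])
  | monomial n a =>
    have h := integrable_rpow_mul_exp_neg_mul_sq hb (s := n) (by linarith [n.cast_nonneg (α := ℝ)])
    simpa [mul_assoc, rpow_natCast] using h.const_mul a

theorem integrable_eval_mul_exp_mul_abs_mul_gphi (p : ℝ[X]) (M : ℝ) :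
    Integrable (fun x : ℝ => p.eval x * (exp (M * |x|) * gphi x)) := by
  refine (((integrable_eval_mul_exp_neg_mul_sq (b := 4⁻¹) (by norm_num) p).norm.const_mul
    (exp (M ^ 2) / √(2 * π)))).mono' (by unfold gphi; fun_prop) (.of_forall fun x => ?_)
  -- `M |x| - x²/2 ≤ M² - x²/4` since `(M - |x|/2)² ≥ 0`
  have hexp : exp (M * |x|) * exp (-(x ^ 2) / 2) ≤ exp (M ^ 2) * exp (-4⁻¹ * x ^ 2) := by
    rw [← exp_add, ← exp_add]
    exact exp_le_exp.2 (by nlinarith [sq_nonneg (M - |x| / 2), sq_abs x])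
  rw [norm_mul, norm_mul, norm_mul, norm_of_nonneg (exp_pos _).le,
    norm_of_nonneg (gphi_pos x).le, norm_of_nonneg (exp_pos _).le, gphi]
  calc ‖p.eval x‖ * (exp (M * |x|) * (exp (-(x ^ 2) / 2) / √(2 * π)))
      = ‖p.eval x‖ * ((exp (M * |x|) * exp (-(x ^ 2) / 2)) / √(2 * π)) := by ring
    _ ≤ ‖p.eval x‖ * ((exp (M ^ 2) * exp (-4⁻¹ * x ^ 2)) / √(2 * π)) := by gcongr
    _ = _ := by ring

theorem integrable_He_mul_He_mul_gphi (m n : ℕ) :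
    Integrable (fun x : ℝ => He m x * He n x * gphi x) := by
  simpa [He_eq_eval_map, mul_assoc] using integrable_eval_mul_exp_mul_abs_mul_gphi
    ((hermite m * hermite n).map (algebraMap ℤ ℝ)) 0

theorem integral_He_sq_mul_gphi (n : ℕ) : ∫ x, He n x ^ 2 * gphi x = n ! := by
  induction n with
  | zero =>
    simp only [He, hermite_zero, map_one, one_pow, one_mul, Nat.factorial_zero, Nat.cast_one,
      gphi_eq_gaussianPDFReal]
    exact integral_gaussianPDFReal_eq_one 0 one_ne_zero
  | succ n ih =>
    have key := integral_mul_deriv_eq_deriv_mul_of_integrable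
      (fun x _ => hasDerivAt_He_succ n x) (fun x _ => hasDerivAt_He_mul_gphi n x)
      (by simpa [Pi.mul_def, mul_assoc] using (integrable_He_mul_He_mul_gphi (n + 1) (n + 1)).neg)
      (by simpa [Pi.mul_def, mul_assoc] using
        (integrable_He_mul_He_mul_gphi n n).const_mul ((n : ℝ) + 1))
      (by simpa [Pi.mul_def, mul_assoc] using integrable_He_mul_He_mul_gphi (n + 1) n)
    have hsq (m : ℕ) : ∫ x, He m x ^ 2 * gphi x = ∫ x, He m x * (He m x * gphi x) := by
      simp only [sq, mul_assoc]
    simp only [mul_neg, integral_neg, mul_assoc, integral_const_mul, neg_inj] at key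
    rw [hsq, key, ← hsq, ih, Nat.factorial_succ]
    push_cast; ring

theorem exp_mul_gphi_le_gphi_sub {M t : ℝ} (ht : |t| ≤ M) (y : ℝ) :
    exp (-(M ^ 2) / 2) * (exp (-(M * |y|)) * gphi y) ≤ gphi (y - t) := by
  have hty : |t * y| ≤ M * |y| := by rw [abs_mul]; gcongr
  have ht2 : t ^ 2 ≤ M ^ 2 := sq_le_sq' (neg_le_of_abs_le ht) (le_of_abs_le ht)
  have key : -(M ^ 2) / 2 + (-(M * |y|) + -(y ^ 2) / 2) ≤ -((y - t) ^ 2) / 2 := by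
    nlinarith [neg_abs_le (t * y)]
  simp only [gphi, ← mul_div_assoc, ← exp_add]
  gcongr

section GaussianConvolution

variable {α : Type*} [MeasurableSpace α] {μ : Measure α} {f : α → ℝ}

theorem integrable_gphi_sub [IsFiniteMeasure μ] (hf : Measurable f) (y : ℝ) :
    Integrable (fun z => gphi (y - f z)) μ :=
  .of_bound (continuous_gphi.measurable.comp (measurable_const.sub hf)).aestronglyMeasurable
    (√(2 * π))⁻¹ (.of_forall fun z => by rw [norm_of_nonneg (gphi_pos _).le]; exact gphi_le _)

theorem stronglyMeasurable_integral_gphi_sub [SFinite μ] (hf : Measurable f) :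
    StronglyMeasurable (fun y => ∫ z, gphi (y - f z) ∂μ) :=
  (continuous_gphi.measurable.comp
    (measurable_fst.sub (hf.comp measurable_snd))).stronglyMeasurable.integral_prod_right'

theorem measureReal_mul_le_integral_gphi_sub [IsFiniteMeasure μ] (hf : Measurable f)
    {s : Set α} (hs : MeasurableSet s) {M : ℝ} (hfs : ∀ z ∈ s, |f z| ≤ M) (y : ℝ) :
    μ.real s * exp (-(M ^ 2) / 2) * (exp (-(M * |y|)) * gphi y) ≤ ∫ z, gphi (y - f z) ∂μ :=
  calc μ.real s * exp (-(M ^ 2) / 2) * (exp (-(M * |y|)) * gphi y)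
      = ∫ _ in s, exp (-(M ^ 2) / 2) * (exp (-(M * |y|)) * gphi y) ∂μ := by
        rw [setIntegral_const, smul_eq_mul, mul_assoc]
    _ ≤ ∫ z in s, gphi (y - f z) ∂μ :=
        setIntegral_mono_on (integrableOn_const (measure_ne_top _ _))
          (integrable_gphi_sub hf y).integrableOn hs fun z hz =>
            exp_mul_gphi_le_gphi_sub (hfs z hz) y
    _ ≤ ∫ z, gphi (y - f z) ∂μ :=
        setIntegral_le_integral (integrable_gphi_sub hf y) (.of_forall fun _ => (gphi_pos _).le)

theorem tendsto_integral_gphi_sub_mul [IsProbabilityMeasure μ] (hf : Measurable f) (y : ℝ) :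
    Tendsto (fun s => ∫ z, gphi (y - s * f z) ∂μ) (𝓝 0) (𝓝 (gphi y)) := by
  have hlim := tendsto_integral_filter_of_dominated_convergence (μ := μ) (l := 𝓝 (0 : ℝ))
    (F := fun s z => gphi (y - s * f z)) (f := fun _ => gphi y)
    (fun _ => (√(2 * π))⁻¹)
    (.of_forall fun s => (integrable_gphi_sub (hf.const_mul s) y).aestronglyMeasurable)
    (.of_forall fun s => .of_forall fun z => by
      rw [norm_of_nonneg (gphi_pos _).le]; exact gphi_le _)
    (integrable_const _)
    (.of_forall fun z => (continuous_gphi.comp (continuous_const.sub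
      (continuous_id.mul continuous_const))).tendsto' 0 (gphi y) (by simp))
  simpa using hlim

end GaussianConvolution

theorem integrable_sq_mul_div_exp_mul_gphi (n : ℕ) (c M : ℝ) :
    Integrable (fun y => (gphi y * He n y) ^ 2 / (c * (exp (-(M * |y|)) * gphi y))) := by
  refine ((integrable_eval_mul_exp_mul_abs_mul_gphi
    ((hermite n * hermite n).map (algebraMap ℤ ℝ)) M).const_mul c⁻¹).congr (.of_forall fun y => ?_)
  have := (gphi_pos y).ne'
  simp only [Polynomial.map_mul, eval_mul, ← He_eq_eval_map, exp_neg]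
  field_simp

theorem integral_sq_mul_div_gphi (n : ℕ) : ∫ y, (gphi y * He n y) ^ 2 / gphi y = n ! := by
  rw [← integral_He_sq_mul_gphi]
  congr 1 with y
  field_simp [(gphi_pos y).ne']

instance : IsProbabilityMeasure stdG := by unfold stdG; infer_instance

theorem measureReal_stdG_pos {s : Set ℝ} (hs : volume s ≠ 0) : 0 < stdG.real s :=
  ENNReal.toReal_pos (mt (gaussianReal_absolutelyContinuous' 0 one_ne_zero ·) hs)
    (measure_ne_top _ _)

/-- With `φ^{(β)}(y) = (−1)^β φ(y) He_β(y)` and `Z_λ(y) = E_z[φ(y − √λ σ(z))]`,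
one has `lim_{λ→0⁺} ∫ (φ^{(β)}(y))² / Z_λ(y) dy = β!`. Since
`(φ^{(β)}(y))² = (φ(y) He_β(y))²`, the integrand is written with the latter. -/
theorem stmt10 (σ : ℝ → ℝ) (hmeas : Measurable σ) (hpb : PolyBounded σ) (β : ℕ) :
    Tendsto
      (fun lam : ℝ =>
        ∫ y : ℝ, (gphi y * He β y) ^ 2 /
          (∫ z, gphi (y - Real.sqrt lam * σ z) ∂stdG))
      (nhdsWithin 0 (Set.Ioi 0))
      (nhds (Nat.factorial β)) := by
  obtain ⟨C, k, hC, -, hσ⟩ := hpb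
  have hσ_small : ∀ lam ∈ Ioc (0 : ℝ) 1, ∀ z ∈ Icc (-1 : ℝ) 1, |√lam * σ z| ≤ 2 * C := by
    intro lam hlam z hz
    have hz : |z| ^ k ≤ 1 := pow_le_one₀ (abs_nonneg z) (abs_le.2 hz)
    rw [abs_mul, abs_of_nonneg (sqrt_nonneg lam)]
    nlinarith [hσ z, abs_nonneg (σ z), sqrt_le_one.2 hlam.2, sqrt_nonneg lam]
  set c := stdG.real (Icc (-1) 1) * exp (-((2 * C) ^ 2) / 2)
  have hc : 0 < c := mul_pos (measureReal_stdG_pos (by simp)) (exp_pos _)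
  have hZ_ge : ∀ᶠ lam in 𝓝[>] 0, ∀ y,
      c * (exp (-(2 * C * |y|)) * gphi y) ≤ ∫ z, gphi (y - √lam * σ z) ∂stdG := by
    filter_upwards [Ioc_mem_nhdsGT one_pos] with lam hlam y
    exact measureReal_mul_le_integral_gphi_sub (hmeas.const_mul _) measurableSet_Icc
      (hσ_small lam hlam) y
  have hsqrt : Tendsto (fun lam : ℝ => √lam) (𝓝[>] 0) (𝓝 0) :=
    (continuous_sqrt.tendsto' 0 0 sqrt_zero).mono_left nhdsWithin_le_nhds
  have key := tendsto_integral_div_of_le_of_tendsto (μ := volume)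
    (u := fun y => (gphi y * He β y) ^ 2)
    ((continuous_gphi.mul (continuous_He β)).pow 2).measurable
    (fun y => sq_nonneg _)
    (fun lam => (stronglyMeasurable_integral_gphi_sub (hmeas.const_mul _)).measurable)
    (fun y => by have := gphi_pos y; positivity) hZ_ge
    (integrable_sq_mul_div_exp_mul_gphi β c (2 * C))
    (fun y => (tendsto_integral_gphi_sub_mul hmeas y).comp hsqrt) (fun y => (gphi_pos y).ne')
  rwa [integral_sq_mul_div_gphi] at key
end
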